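/- Let A, B be finite nonempty sets of facilities in a metric space and Γ = Γ(A,B) ⊆ B a minimal subset with d(μ,Γ) = d(μ,B) for all μ ∈ A. Then |Γ| ≤ |A|, and summing the pointwise bound over a finite customer set C with cost(S) = ∑_{x∈C} d(x,S) gives cost(Γ) ≤ 2·cost(A) + cost(B). -/

import Mathlib

/-! Projecting `A` onto `B` costs at most twice the detour through `A`: if `μ ∈ A` is
nearest to `x`, then `d(x, Γ) ≤ d(μ, Γ) + d(x, μ) = d(μ, B) + d(x, μ) ≤ d(x, B) + 2 d(x, μ)`.
For the cardinality bound, the nearest points in `Γ` of the points of `A` already realise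
every `d(μ, Γ)`, so by minimality they exhaust `Γ`. -/

open Metric

section

variable {X : Type*} [PseudoMetricSpace X]

theorem Metric.infDist_le_two_mul_infDist_add_infDist {A S T : Set X} (hA : A.Nonempty)
    (h : ∀ μ ∈ A, infDist μ S ≤ infDist μ T) (x : X) :
    infDist x S ≤ 2 * infDist x A + infDist x T := by
  have hdetour : ∀ μ ∈ A, infDist x S - infDist x T ≤ 2 * dist x μ := fun μ hμ => by
    have hS : infDist x S ≤ infDist μ S + dist x μ := infDist_le_infDist_add_dist
    have hT : infDist μ T ≤ infDist x T + dist μ x := infDist_le_infDist_add_dist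
    linarith [h μ hμ, dist_comm x μ]
  have hA' : (infDist x S - infDist x T) / 2 ≤ infDist x A :=
    (le_infDist hA).2 fun μ hμ => by linarith [hdetour μ hμ]
  linarith

theorem Finset.exists_subset_card_le_forall_infDist_eq (A Γ : Finset X) :
    ∃ Γ' ⊆ Γ, Γ'.card ≤ A.card ∧ ∀ μ ∈ A, infDist μ (Γ' : Set X) = infDist μ (Γ : Set X) := by
  classical
  rcases Γ.eq_empty_or_nonempty with rfl | hΓ
  · exact ⟨∅, subset_rfl, by simp, fun _ _ => rfl⟩
  choose g hgΓ hgd using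
    Γ.finite_toSet.isCompact.exists_infDist_eq_dist (coe_nonempty.2 hΓ)
  refine ⟨A.image g, image_subset_iff.2 fun μ _ => hgΓ μ, card_image_le, fun μ hμ => ?_⟩
  have hgμ : g μ ∈ (A.image g : Set X) := by simpa using ⟨μ, hμ, rfl⟩
  refine le_antisymm ?_ (infDist_le_infDist_of_subset ?_ ⟨g μ, hgμ⟩)
  · exact hgd μ ▸ infDist_le_dist_of_mem hgμ
  · exact coe_subset.2 (image_subset_iff.2 fun μ _ => hgΓ μ)
end

theorem stmt13_general {X : Type*} [MetricSpace X] (A B Γ C : Finset X)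
    (hA : A.Nonempty)
    (hnear : ∀ μ ∈ A, Metric.infDist μ (Γ : Set X) = Metric.infDist μ (B : Set X))
    (hmin : ∀ Γ' ⊆ Γ,
      (∀ μ ∈ A, Metric.infDist μ (Γ' : Set X) = Metric.infDist μ (B : Set X)) → Γ' = Γ) :
    Γ.card ≤ A.card ∧
      ∑ x ∈ C, Metric.infDist x (Γ : Set X)
        ≤ 2 * ∑ x ∈ C, Metric.infDist x (A : Set X)
          + ∑ x ∈ C, Metric.infDist x (B : Set X) := by
  constructor
  · obtain ⟨Γ', hsub, hcard, hdist⟩ := A.exists_subset_card_le_forall_infDist_eq Γ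
    exact hmin Γ' hsub (fun μ hμ => (hdist μ hμ).trans (hnear μ hμ)) ▸ hcard
  · calc ∑ x ∈ C, infDist x (Γ : Set X)
        ≤ ∑ x ∈ C, (2 * infDist x (A : Set X) + infDist x (B : Set X)) :=
          Finset.sum_le_sum fun x _ => infDist_le_two_mul_infDist_add_infDist
            (Finset.coe_nonempty.2 hA) (fun μ hμ => (hnear μ hμ).le) x
      _ = 2 * ∑ x ∈ C, infDist x (A : Set X) + ∑ x ∈ C, infDist x (B : Set X) := by
          rw [Finset.sum_add_distrib, Finset.mul_sum]

/-- Let `Γ = Γ(A,B) ⊆ B` be a minimal subset with `d(μ,Γ) = d(μ,B)` for all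
`μ ∈ A`. Then `|Γ| ≤ |A|`, and for any finite customer set `C`, with
`cost S = ∑_{x ∈ C} d(x,S)`, one has `cost Γ ≤ 2 cost A + cost B`. -/
theorem stmt13 {X : Type*} [MetricSpace X] (A B Γ C : Finset X)
    (hA : A.Nonempty) (hB : B.Nonempty) (hΓB : Γ ⊆ B)
    (hnear : ∀ μ ∈ A, Metric.infDist μ (Γ : Set X) = Metric.infDist μ (B : Set X))
    (hmin : ∀ Γ' ⊆ Γ,
      (∀ μ ∈ A, Metric.infDist μ (Γ' : Set X) = Metric.infDist μ (B : Set X)) → Γ' = Γ) :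
    Γ.card ≤ A.card ∧
      ∑ x ∈ C, Metric.infDist x (Γ : Set X)
        ≤ 2 * ∑ x ∈ C, Metric.infDist x (A : Set X)
          + ∑ x ∈ C, Metric.infDist x (B : Set X) :=
  stmt13_general A B Γ C hA hnear hmin
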